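/- arXiv:0710.2305 — 10 statements merged into one kernel-verified Lean document; each statement's English description precedes it below -/
import Mathlib

section
/- Let a, b, c, d, x, y be real numbers with 0 ≤ c ≤ a, 0 ≤ d ≤ b, 0 ≤ x ≤ min(a,b), and 0 ≤ y ≤ min(c,d). Then (a − c)(b − d) + x(c + d) + y(a + b) − (x + y)² ≥ 0. -/
theorem cliques_min_lemma (a b c d x y : ℝ)
    (hc0 : 0 ≤ c) (hca : c ≤ a) (hd0 : 0 ≤ d) (hdb : d ≤ b)
    (hx0 : 0 ≤ x) (hx : x ≤ min a b) (hy0 : 0 ≤ y) (hy : y ≤ min c d) :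
    (a - c) * (b - d) + x * (c + d) + y * (a + b) - (x + y) ^ 2 ≥ 0 := by
  have hxa : x ≤ a := le_trans hx (min_le_left a b)
  have hxb : x ≤ b := le_trans hx (min_le_right a b)
  have hyc : y ≤ c := le_trans hy (min_le_left c d)
  have hyd : y ≤ d := le_trans hy (min_le_right c d)
  rcases le_or_gt (x + y) (c + d) with h | h
  · nlinarith [mul_nonneg (sub_nonneg.2 hca) (sub_nonneg.2 hdb),
      mul_nonneg hy0 (by linarith : (0:ℝ) ≤ (a - c) + (b - d)),
      mul_nonneg (by linarith : (0:ℝ) ≤ x + y) (sub_nonneg.2 h)]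
  · have hst : (0:ℝ) ≤ x + y - c - d := by linarith
    have hbd : (0:ℝ) ≤ b - d + y - c := by linarith
    nlinarith [mul_nonneg (sub_nonneg.2 hxa) hbd,
      mul_nonneg hst (sub_nonneg.2 hxb),
      mul_nonneg hc0 (sub_nonneg.2 hxa),
      mul_nonneg hd0 (sub_nonneg.2 hxb),
      mul_nonneg hy0 (sub_nonneg.2 hyc),
      mul_nonneg hc0 hd0]
end

section
/- For every real number c > 0 and every positive integer n, the set 𝒮_n(c) is nonempty if and only if c < 1/2 and n ≥ ⌈1/(1 − 2c)⌉. -/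
/-- The multilinear form `L_r(A, x)` of an `n × n` matrix `A` and a vector `x`. -/
noncomputable def L (n r : ℕ) (A : Fin n → Fin n → ℝ) (x : Fin n → ℝ) : ℝ :=
  ∑ X ∈ Finset.powersetCard r (Finset.univ : Finset (Fin n)),
    (∏ i ∈ X, ∏ j ∈ X.filter (fun j => i < j), A i j) * ∏ i ∈ X, x i

/-- `(A, x) ∈ 𝒮_n(c)`: `A` is symmetric with zero diagonal and entries in `[0,1]`,
`x` is nonnegative, `L_1(A,x) = 1` and `L_2(A,x) = c`. -/
noncomputable def memS (n : ℕ) (c : ℝ) (A : Fin n → Fin n → ℝ) (x : Fin n → ℝ) : Prop :=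
  (∀ i, A i i = 0) ∧ (∀ i j, 0 ≤ A i j) ∧ (∀ i j, A i j ≤ 1) ∧ (∀ i j, A i j = A j i) ∧
    (∀ i, 0 ≤ x i) ∧ L n 1 A x = 1 ∧ L n 2 A x = c

open Finset

lemma sum_pairs {n : ℕ} (f : Finset (Fin n) → ℝ) :
    ∑ X ∈ powersetCard 2 (univ : Finset (Fin n)), f X
      = ∑ p ∈ (univ : Finset (Fin n × Fin n)).filter (fun p => p.1 < p.2), f {p.1, p.2} := by
  refine (Finset.sum_bij (fun p _ => ({p.1, p.2} : Finset (Fin n))) ?_ ?_ ?_ ?_).symm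
  · intro p hp
    simp only [mem_filter, mem_univ, true_and] at hp
    simp [Finset.mem_powersetCard, Finset.card_pair (ne_of_lt hp)]
  · rintro ⟨a, b⟩ hp ⟨a', b'⟩ hq h
    simp only [mem_filter, mem_univ, true_and] at hp hq
    simp only at h
    have h1 : a ∈ ({a', b'} : Finset (Fin n)) := h ▸ (by simp : a ∈ ({a, b} : Finset (Fin n)))
    have h2 : b ∈ ({a', b'} : Finset (Fin n)) := h ▸ (by simp : b ∈ ({a, b} : Finset (Fin n)))
    simp only [mem_insert, mem_singleton] at h1 h2
    rcases h1 with h1 | h1 <;> rcases h2 with h2 | h2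
    · exact absurd hp (by rw [h1, h2]; exact lt_irrefl _)
    · exact Prod.ext h1 h2
    · exact absurd (h1 ▸ h2 ▸ hp) (lt_asymm hq)
    · exact absurd hp (by rw [h1, h2]; exact lt_irrefl _)
  · intro X hX
    rw [Finset.mem_powersetCard] at hX
    obtain ⟨a, b, hab, rfl⟩ := Finset.card_eq_two.mp hX.2
    rcases hab.lt_or_gt with h | h
    · exact ⟨(a, b), by simp [h], rfl⟩
    · exact ⟨(b, a), by simp [h], Finset.pair_comm b a⟩
  · exact fun p hp => rfl

lemma prod_pair_term {n : ℕ} (A : Fin n → Fin n → ℝ) (x : Fin n → ℝ) {a b : Fin n} (h : a < b) :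
    (∏ i ∈ ({a, b} : Finset (Fin n)), ∏ j ∈ ({a, b} : Finset (Fin n)).filter (fun j => i < j), A i j)
      * ∏ i ∈ ({a, b} : Finset (Fin n)), x i = A a b * (x a * x b) := by
  have hab : a ≠ b := ne_of_lt h
  have h1 : ({a, b} : Finset (Fin n)).filter (fun j => a < j) = {b} := by
    ext j
    simp only [mem_filter, mem_insert, mem_singleton]
    constructor
    · rintro ⟨h1 | h1, h2⟩
      · exact absurd (h1 ▸ h2) (lt_irrefl a)
      · exact h1
    · rintro rfl; exact ⟨Or.inr rfl, h⟩
  have h2 : ({a, b} : Finset (Fin n)).filter (fun j => b < j) = ∅ := by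
    ext j
    simp only [mem_filter, mem_insert, mem_singleton, Finset.notMem_empty, iff_false]
    rintro ⟨h1 | h1, h2⟩
    · exact lt_asymm h (h1 ▸ h2)
    · exact lt_irrefl b (h1 ▸ h2)
  rw [Finset.prod_pair hab, Finset.prod_pair hab, h1, h2]
  simp

lemma L_one {n : ℕ} (A : Fin n → Fin n → ℝ) (x : Fin n → ℝ) : L n 1 A x = ∑ i, x i := by
  unfold L
  rw [Finset.powersetCard_one, Finset.sum_map]
  refine Finset.sum_congr rfl fun a _ => ?_
  simp [Finset.filter_singleton]

lemma L_two {n : ℕ} (A : Fin n → Fin n → ℝ) (x : Fin n → ℝ) :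
    L n 2 A x = ∑ p ∈ (univ : Finset (Fin n × Fin n)).filter (fun p => p.1 < p.2),
      A p.1 p.2 * (x p.1 * x p.2) := by
  unfold L
  rw [sum_pairs]
  refine Finset.sum_congr rfl fun p hp => ?_
  simp only [mem_filter, mem_univ, true_and] at hp
  exact prod_pair_term A x hp

lemma two_S2 {n : ℕ} (x : Fin n → ℝ) :
    2 * (∑ p ∈ (univ : Finset (Fin n × Fin n)).filter (fun p => p.1 < p.2), x p.1 * x p.2)
      + ∑ i, (x i)^2 = (∑ i, x i)^2 := by
  have hsq : (∑ i, x i)^2 = ∑ p : Fin n × Fin n, x p.1 * x p.2 := by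
    rw [sq, Fintype.sum_mul_sum, Fintype.sum_prod_type]
  have h1 := Finset.sum_filter_add_sum_filter_not (univ : Finset (Fin n × Fin n))
    (fun p => p.1 < p.2) (fun p => x p.1 * x p.2)
  have h2 := Finset.sum_filter_add_sum_filter_not
    ((univ : Finset (Fin n × Fin n)).filter (fun p => ¬ p.1 < p.2))
    (fun p => p.1 = p.2) (fun p => x p.1 * x p.2)
  have e1 : ((univ : Finset (Fin n × Fin n)).filter (fun p => ¬ p.1 < p.2)).filter
      (fun p => p.1 = p.2) = (univ : Finset (Fin n × Fin n)).filter (fun p => p.1 = p.2) := by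
    ext p
    simp only [mem_filter, mem_univ, true_and]
    exact ⟨fun h => h.2, fun h => ⟨by rw [h]; exact lt_irrefl _, h⟩⟩
  have e2 : ((univ : Finset (Fin n × Fin n)).filter (fun p => ¬ p.1 < p.2)).filter
      (fun p => ¬ p.1 = p.2) = (univ : Finset (Fin n × Fin n)).filter (fun p => p.2 < p.1) := by
    ext p
    simp only [mem_filter, mem_univ, true_and]
    constructor
    · rintro ⟨ha, hb⟩
      exact lt_of_le_of_ne (le_of_not_gt ha) (fun e => hb e.symm)
    · intro h
      exact ⟨asymm h, ne_of_gt h⟩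
  have ediag : ∑ p ∈ (univ : Finset (Fin n × Fin n)).filter (fun p => p.1 = p.2),
      x p.1 * x p.2 = ∑ i, (x i)^2 := by
    refine Finset.sum_nbij' (fun p => p.1) (fun i => (i, i)) ?_ ?_ ?_ ?_ ?_
    · intro a _; exact mem_univ _
    · intro a _; simp
    · intro a ha
      simp only [mem_filter, mem_univ, true_and] at ha
      exact Prod.ext rfl ha
    · intro a _; rfl
    · intro a ha
      simp only [mem_filter, mem_univ, true_and] at ha
      rw [← ha, sq]
  have eswap : ∑ p ∈ (univ : Finset (Fin n × Fin n)).filter (fun p => p.2 < p.1),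
      x p.1 * x p.2 = ∑ p ∈ (univ : Finset (Fin n × Fin n)).filter (fun p => p.1 < p.2),
      x p.1 * x p.2 := by
    refine Finset.sum_nbij' (fun p => p.swap) (fun p => p.swap) ?_ ?_ ?_ ?_ ?_
    · intro a ha; simp only [mem_filter, mem_univ, true_and] at ha ⊢; exact ha
    · intro a ha; simp only [mem_filter, mem_univ, true_and] at ha ⊢; exact ha
    · intro a _; rfl
    · intro a _; rfl
    · intro a _; exact mul_comm _ _
  rw [e1, e2, ediag] at h2
  rw [hsq, ← h1, ← h2, eswap]
  ring

theorem S_nonempty_iff (c : ℝ) (hc : 0 < c) (n : ℕ) (hn : 0 < n) :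
    (∃ (A : Fin n → Fin n → ℝ) (x : Fin n → ℝ), memS n c A x) ↔
      c < 1 / 2 ∧ ⌈1 / (1 - 2 * c)⌉₊ ≤ n := by
  have hnpos : (0:ℝ) < n := by exact_mod_cast hn
  constructor
  · rintro ⟨A, x, hdiag, hA0, hA1, hsymm, hx0, h1, h2⟩
    rw [L_one] at h1
    rw [L_two] at h2
    have hcS : c ≤ ∑ p ∈ (univ : Finset (Fin n × Fin n)).filter (fun p => p.1 < p.2),
        x p.1 * x p.2 := by
      rw [← h2]
      refine Finset.sum_le_sum fun p hp => ?_
      have hx : 0 ≤ x p.1 * x p.2 := mul_nonneg (hx0 _) (hx0 _)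
      calc A p.1 p.2 * (x p.1 * x p.2) ≤ 1 * (x p.1 * x p.2) :=
            mul_le_mul_of_nonneg_right (hA1 _ _) hx
        _ = x p.1 * x p.2 := one_mul _
    have hid := two_S2 x
    rw [h1] at hid
    have hCS : (1:ℝ) ≤ n * ∑ i, (x i)^2 := by
      have := sq_sum_le_card_mul_sum_sq (s := (univ : Finset (Fin n))) (f := x)
      simpa [h1, Finset.card_univ] using this
    have hxsq : (1:ℝ)/n ≤ ∑ i, (x i)^2 := by
      rw [div_le_iff₀ hnpos]; nlinarith [hCS]
    have hinv : (0:ℝ) < 1/n := by positivity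
    have hc2 : 2*c ≤ 1 - 1/n := by linarith
    constructor
    · linarith
    · rw [Nat.ceil_le, div_le_iff₀ (by linarith : (0:ℝ) < 1 - 2*c)]
      have hmul : (1:ℝ)/n * n = 1 := by field_simp
      nlinarith [hc2]
  · rintro ⟨hchalf, hceil⟩
    have h2c : (0:ℝ) < 1 - 2*c := by linarith
    have hle : 1/(1-2*c) ≤ (n:ℝ) := Nat.ceil_le.mp hceil
    have key : (1:ℝ) ≤ n * (1 - 2*c) := by
      rw [div_le_iff₀ h2c] at hle; nlinarith
    have hn2 : 2 ≤ n := by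
      by_contra h
      push_neg at h
      have hn1 : n = 1 := by omega
      subst hn1
      norm_num at key
      linarith
    have hnR : (2:ℝ) ≤ n := by exact_mod_cast hn2
    have hn1 : (0:ℝ) < (n:ℝ) - 1 := by linarith
    have hne : (n:ℝ) ≠ 0 := ne_of_gt hnpos
    have hne1 : (n:ℝ) - 1 ≠ 0 := ne_of_gt hn1
    set t : ℝ := 2*c*n/((n:ℝ)-1) with ht
    have ht0 : 0 ≤ t := div_nonneg (by positivity) (le_of_lt hn1)
    have ht1 : t ≤ 1 := by
      rw [ht, div_le_one hn1]; nlinarith [key]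
    refine ⟨fun i j => if i = j then 0 else t, fun _ => 1/n, ?_, ?_, ?_, ?_, ?_, ?_, ?_⟩
    · intro i; simp
    · intro i j; dsimp only; split_ifs
      · exact le_refl _
      · exact ht0
    · intro i j; dsimp only; split_ifs
      · norm_num
      · exact ht1
    · intro i j; dsimp only
      by_cases h : i = j
      · simp [h]
      · simp [h, Ne.symm h]
    · intro i; positivity
    · rw [L_one, Finset.sum_const, Finset.card_univ, Fintype.card_fin, nsmul_eq_mul]
      field_simp
    · rw [L_two]
      have hA : ∀ p ∈ (univ : Finset (Fin n × Fin n)).filter (fun p => p.1 < p.2),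
          (if p.1 = p.2 then (0:ℝ) else t) * ((1:ℝ)/n * (1/n)) = t * (1/n * (1/n)) := by
        intro p hp
        simp only [mem_filter, mem_univ, true_and] at hp
        rw [if_neg (ne_of_lt hp)]
      rw [Finset.sum_congr rfl hA, Finset.sum_const, nsmul_eq_mul]
      have hcard : (((univ : Finset (Fin n × Fin n)).filter (fun p => p.1 < p.2)).card : ℝ)
          = n*((n:ℝ)-1)/2 := by
        have hs := sum_pairs (n := n) (fun _ => (1:ℝ))
        rw [Finset.sum_const, Finset.sum_const, Finset.card_powersetCard, Finset.card_univ,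
          Fintype.card_fin] at hs
        have h2' : ((n.choose 2 : ℕ) : ℝ)
            = (((univ : Finset (Fin n × Fin n)).filter (fun p => p.1 < p.2)).card : ℝ) := by
          simpa using hs
        rw [← h2', Nat.cast_choose_two]
      rw [hcard, ht]
      field_simp
end

section
/- Let c ∈ (0, 1/2) and let n, r be integers with 3 ≤ r ≤ ξ(c) ≤ n. If φ_r(n,c) > 0 and 0 < c₀ < c, then φ_r(n,c) > φ_r(n,c₀). -/
/-- `ξ(c) = ⌈1/(1 - 2c)⌉`. -/
noncomputable def xi (c : ℝ) : ℕ := ⌈1 / (1 - 2 * c)⌉₊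

/-- `φ_r(n, c) = min { L_r(A, x) : r ≤ k ≤ n, (A, x) ∈ 𝒮_k(c) }`. -/
noncomputable def phi (r n : ℕ) (c : ℝ) : ℝ :=
  sInf {v : ℝ | ∃ k, r ≤ k ∧ k ≤ n ∧ ∃ (A : Fin k → Fin k → ℝ) (x : Fin k → ℝ),
    memS k c A x ∧ L k r A x = v}

/-- `√(1 - 2 ξ(c) c / (ξ(c) - 1))`. -/
noncomputable def sqc (c : ℝ) : ℝ :=
  Real.sqrt (1 - 2 * (xi c : ℝ) * c / ((xi c : ℝ) - 1))

/-- The large coordinate `x` of the optimal vector `x_c`. -/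
noncomputable def xval (c : ℝ) : ℝ := 1 / (xi c : ℝ) + (1 / (xi c : ℝ)) * sqc c

/-- The small coordinate `y` of the optimal vector `x_c`. -/
noncomputable def yval (c : ℝ) : ℝ :=
  1 / (xi c : ℝ) - (((xi c : ℝ) - 1) / (xi c : ℝ)) * sqc c

/-- `φ_r(c) = C(s-1, r) x^r + C(s-1, r-1) x^{r-1} y` where `s = ξ(c)`. -/
noncomputable def phiF (r : ℕ) (c : ℝ) : ℝ :=
  ((xi c - 1).choose r : ℝ) * xval c ^ r +
    ((xi c - 1).choose (r - 1) : ℝ) * xval c ^ (r - 1) * yval c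

lemma L_nonneg {k r : ℕ} {A : Fin k → Fin k → ℝ} {x : Fin k → ℝ}
    (hA : ∀ i j, 0 ≤ A i j) (hx : ∀ i, 0 ≤ x i) : 0 ≤ L k r A x := by
  apply Finset.sum_nonneg
  intro X _
  exact mul_nonneg
    (Finset.prod_nonneg fun i _ => Finset.prod_nonneg fun j _ => hA i j)
    (Finset.prod_nonneg fun i _ => hx i)

lemma prod_smul_eq {k : ℕ} (t : ℝ) (A : Fin k → Fin k → ℝ) (X : Finset (Fin k)) :
    ∏ i ∈ X, ∏ j ∈ X.filter (fun j => i < j), (t * A i j)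
      = t ^ (∑ i ∈ X, (X.filter (fun j => i < j)).card)
        * ∏ i ∈ X, ∏ j ∈ X.filter (fun j => i < j), A i j := by
  calc ∏ i ∈ X, ∏ j ∈ X.filter (fun j => i < j), (t * A i j)
      = ∏ i ∈ X, (t ^ (X.filter (fun j => i < j)).card
          * ∏ j ∈ X.filter (fun j => i < j), A i j) := by
        refine Finset.prod_congr rfl fun i _ => ?_
        rw [Finset.prod_mul_distrib, Finset.prod_const]
    _ = _ := by
        rw [Finset.prod_mul_distrib, Finset.prod_pow_eq_pow_sum]

lemma exp_sum_two {k : ℕ} {X : Finset (Fin k)} (hX : X.card = 2) :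
    (∑ i ∈ X, (X.filter (fun j => i < j)).card) = 1 := by
  obtain ⟨a, b, hab, rfl⟩ := Finset.card_eq_two.mp hX
  rcases hab.lt_or_gt with h | h
  · rw [Finset.sum_pair hab]
    simp [Finset.filter_insert, Finset.filter_singleton, h, lt_irrefl, not_lt.2 h.le]
  · rw [Finset.sum_pair hab]
    simp [Finset.filter_insert, Finset.filter_singleton, h, lt_irrefl, not_lt.2 h.le]

lemma L_one_smul {k : ℕ} (t : ℝ) (A : Fin k → Fin k → ℝ) (x : Fin k → ℝ) :
    L k 1 (fun i j => t * A i j) x = L k 1 A x := by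
  refine Finset.sum_congr rfl fun X hX => ?_
  have hc : X.card = 1 := (Finset.mem_powersetCard.mp hX).2
  obtain ⟨a, rfl⟩ := Finset.card_eq_one.mp hc
  simp [Finset.filter_singleton]

lemma L_two_smul {k : ℕ} (t : ℝ) (A : Fin k → Fin k → ℝ) (x : Fin k → ℝ) :
    L k 2 (fun i j => t * A i j) x = t * L k 2 A x := by
  rw [L, L, Finset.mul_sum]
  refine Finset.sum_congr rfl fun X hX => ?_
  have hc : X.card = 2 := (Finset.mem_powersetCard.mp hX).2
  rw [prod_smul_eq, exp_sum_two hc, pow_one, mul_assoc]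

lemma L_smul_le {k r : ℕ} (hr2 : 2 ≤ r) {t : ℝ} (ht0 : 0 ≤ t) (ht1 : t ≤ 1)
    {A : Fin k → Fin k → ℝ} {x : Fin k → ℝ}
    (hA : ∀ i j, 0 ≤ A i j) (hx : ∀ i, 0 ≤ x i) :
    L k r (fun i j => t * A i j) x ≤ t * L k r A x := by
  rw [L, L, Finset.mul_sum]
  refine Finset.sum_le_sum fun X hX => ?_
  have hc : X.card = r := (Finset.mem_powersetCard.mp hX).2
  rw [prod_smul_eq]
  have he : 1 ≤ ∑ i ∈ X, (X.filter (fun j => i < j)).card := by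
    have h2 : 1 < X.card := by omega
    obtain ⟨a, ha, b, hb, hab⟩ := Finset.one_lt_card.mp h2
    rcases hab.lt_or_gt with h | h
    · have hmem : b ∈ X.filter (fun j => a < j) := Finset.mem_filter.mpr ⟨hb, h⟩
      have h1 : 1 ≤ (X.filter (fun j => a < j)).card := Finset.card_pos.mpr ⟨b, hmem⟩
      calc 1 ≤ (X.filter (fun j => a < j)).card := h1
        _ ≤ _ := Finset.single_le_sum (f := fun i => (X.filter (fun j => i < j)).card) (fun i _ => Nat.zero_le _) ha
    · have hmem : a ∈ X.filter (fun j => b < j) := Finset.mem_filter.mpr ⟨ha, h⟩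
      have h1 : 1 ≤ (X.filter (fun j => b < j)).card := Finset.card_pos.mpr ⟨a, hmem⟩
      calc 1 ≤ (X.filter (fun j => b < j)).card := h1
        _ ≤ _ := Finset.single_le_sum (f := fun i => (X.filter (fun j => i < j)).card) (fun i _ => Nat.zero_le _) hb
  have hP : 0 ≤ (∏ i ∈ X, ∏ j ∈ X.filter (fun j => i < j), A i j) * ∏ i ∈ X, x i :=
    mul_nonneg (Finset.prod_nonneg fun i _ => Finset.prod_nonneg fun j _ => hA i j)
      (Finset.prod_nonneg fun i _ => hx i)
  have ht : t ^ (∑ i ∈ X, (X.filter (fun j => i < j)).card) ≤ t := by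
    calc t ^ (∑ i ∈ X, (X.filter (fun j => i < j)).card) ≤ t ^ 1 :=
          pow_le_pow_of_le_one ht0 ht1 he
      _ = t := pow_one t
  calc t ^ (∑ i ∈ X, (X.filter (fun j => i < j)).card)
        * (∏ i ∈ X, ∏ j ∈ X.filter (fun j => i < j), A i j) * ∏ i ∈ X, x i
      = t ^ (∑ i ∈ X, (X.filter (fun j => i < j)).card)
        * ((∏ i ∈ X, ∏ j ∈ X.filter (fun j => i < j), A i j) * ∏ i ∈ X, x i) := by ring
    _ ≤ t * ((∏ i ∈ X, ∏ j ∈ X.filter (fun j => i < j), A i j) * ∏ i ∈ X, x i) :=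
        mul_le_mul_of_nonneg_right ht hP

theorem phi_strict_mono (c : ℝ) (hc : c ∈ Set.Ioo (0 : ℝ) (1 / 2)) (n r : ℕ)
    (hr : 3 ≤ r) (hrx : r ≤ xi c) (hxn : xi c ≤ n)
    (hpos : 0 < phi r n c) (c₀ : ℝ) (hc₀ : 0 < c₀) (hc₀c : c₀ < c) :
    phi r n c₀ < phi r n c := by
  set S : ℝ → Set ℝ := fun c' => {v : ℝ | ∃ k, r ≤ k ∧ k ≤ n ∧
    ∃ (A : Fin k → Fin k → ℝ) (x : Fin k → ℝ), memS k c' A x ∧ L k r A x = v} with hS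
  have hphi : ∀ c', phi r n c' = sInf (S c') := fun _ => rfl
  have hbdd : ∀ c', BddBelow (S c') := by
    intro c'
    refine ⟨0, ?_⟩
    rintro v ⟨k, -, -, A, x, ⟨-, hA0, -, -, hx, -, -⟩, rfl⟩
    exact L_nonneg hA0 hx
  have hne : (S c).Nonempty := by
    by_contra h
    rw [Set.not_nonempty_iff_eq_empty] at h
    rw [hphi, h, Real.sInf_empty] at hpos
    exact lt_irrefl 0 hpos
  set t : ℝ := c₀ / c with htdef
  have ht0 : 0 < t := div_pos hc₀ hc.1
  have ht1 : t < 1 := (div_lt_one hc.1).mpr hc₀c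
  have key : ∀ v ∈ S c, phi r n c₀ ≤ t * v := by
    rintro v ⟨k, hrk, hkn, A, x, ⟨hd, hA0, hA1, hsym, hx, h1, h2⟩, rfl⟩
    have hmem' : memS k c₀ (fun i j => t * A i j) x := by
      refine ⟨fun i => by simp only []; rw [hd i, mul_zero], fun i j => mul_nonneg ht0.le (hA0 i j),
        fun i j => mul_le_one₀ ht1.le (hA0 i j) (hA1 i j),
        fun i j => by simp only []; rw [hsym i j], hx, ?_, ?_⟩
      · rw [L_one_smul, h1]
      · rw [L_two_smul, h2, htdef, div_mul_cancel₀ _ (ne_of_gt hc.1)]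
    have hw : L k r (fun i j => t * A i j) x ∈ S c₀ :=
      ⟨k, hrk, hkn, _, _, hmem', rfl⟩
    calc phi r n c₀ ≤ L k r (fun i j => t * A i j) x := by
          rw [hphi]; exact csInf_le (hbdd c₀) hw
      _ ≤ t * L k r A x := L_smul_le (by omega) ht0.le ht1.le hA0 hx
  have hle : phi r n c₀ ≤ t * phi r n c := by
    have h1 : phi r n c₀ / t ≤ phi r n c := by
      rw [hphi c]
      refine le_csInf hne fun v hv => ?_
      rw [div_le_iff₀ ht0]
      calc phi r n c₀ ≤ t * v := key v hv
        _ = v * t := mul_comm _ _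
    calc phi r n c₀ = phi r n c₀ / t * t := by field_simp
      _ ≤ phi r n c * t := mul_le_mul_of_nonneg_right h1 ht0.le
      _ = t * phi r n c := mul_comm _ _
  calc phi r n c₀ ≤ t * phi r n c := hle
    _ < 1 * phi r n c := mul_lt_mul_of_pos_right ht1 hpos
    _ = phi r n c := one_mul _
end

section
/- Let c ∈ (0, 1/2) and let n, r be integers with 3 ≤ r ≤ n and r > ξ(c). Then φ_r(n,c) = 0. -/
lemma aux_L_one (k : ℕ) (A : Fin k → Fin k → ℝ) (x : Fin k → ℝ) :
    L k 1 A x = ∑ i, x i := by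
  rw [L]
  refine Finset.sum_bij' (i := fun X hX => X.min' ?_) (j := fun a _ => {a}) ?_ ?_ ?_ ?_ ?_
  · rw [Finset.mem_powersetCard] at hX
    exact Finset.card_pos.mp (by omega)
  · intro a ha; exact Finset.mem_univ _
  · intro a ha
    simp [Finset.mem_powersetCard]
  · intro X hX
    rw [Finset.mem_powersetCard] at hX
    apply Finset.eq_of_subset_of_card_le
    · intro y hy; simp at hy; subst hy; exact Finset.min'_mem _ _
    · simp [hX.2]
  · intro a ha
    simp
  · intro X hX
    rw [Finset.mem_powersetCard] at hX
    obtain ⟨a, ha⟩ := Finset.card_eq_one.mp hX.2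
    subst ha
    simp [Finset.filter_singleton]

lemma aux_L_two (k : ℕ) (A : Fin k → Fin k → ℝ) (x : Fin k → ℝ) :
    L k 2 A x = ∑ p ∈ Finset.univ.filter (fun p : Fin k × Fin k => p.1 < p.2),
      A p.1 p.2 * (x p.1 * x p.2) := by
  rw [L]
  refine (Finset.sum_bij' (i := fun (p : Fin k × Fin k) (_ : p ∈ Finset.univ.filter
        (fun p : Fin k × Fin k => p.1 < p.2)) => ({p.1, p.2} : Finset (Fin k)))
    (j := fun X hX => (X.min' ?_, X.max' ?_)) ?_ ?_ ?_ ?_ ?_).symm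
  · rw [Finset.mem_powersetCard] at hX
    exact Finset.card_pos.mp (by omega)
  · rw [Finset.mem_powersetCard] at hX
    exact Finset.card_pos.mp (by omega)
  · intro p hp
    simp only [Finset.mem_filter, Finset.mem_univ, true_and] at hp
    rw [Finset.mem_powersetCard]
    exact ⟨Finset.subset_univ _, Finset.card_pair hp.ne⟩
  · intro X hX
    rw [Finset.mem_powersetCard] at hX
    simp only [Finset.mem_filter, Finset.mem_univ, true_and]
    exact Finset.min'_lt_max'_of_card _ (by omega)
  · intro p hp
    simp only [Finset.mem_filter, Finset.mem_univ, true_and] at hp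
    have h1 : ({p.1, p.2} : Finset (Fin k)).min' (by simp) = p.1 := by
      apply le_antisymm
      · exact Finset.min'_le _ _ (by simp)
      · apply Finset.le_min'
        intro y hy
        simp only [Finset.mem_insert, Finset.mem_singleton] at hy
        rcases hy with h | h <;> subst h
        · exact le_rfl
        · exact hp.le
    have h2 : ({p.1, p.2} : Finset (Fin k)).max' (by simp) = p.2 := by
      apply le_antisymm
      · apply Finset.max'_le
        intro y hy
        simp only [Finset.mem_insert, Finset.mem_singleton] at hy
        rcases hy with h | h <;> subst h
        · exact hp.le
        · exact le_rfl
      · exact Finset.le_max' _ _ (by simp)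
    exact Prod.ext h1 h2
  · intro X hX
    rw [Finset.mem_powersetCard] at hX
    apply Finset.eq_of_subset_of_card_le
    · intro y hy
      simp only [Finset.mem_insert, Finset.mem_singleton] at hy
      rcases hy with h | h <;> subst h
      · exact Finset.min'_mem _ _
      · exact Finset.max'_mem _ _
    · have hlt := Finset.min'_lt_max'_of_card X (show 1 < X.card by omega)
      have h2 : ({X.min' (Finset.card_pos.mp (by omega)),
          X.max' (Finset.card_pos.mp (by omega))} : Finset (Fin k)).card = 2 :=
        Finset.card_pair hlt.ne
      exact le_of_eq (hX.2.trans h2.symm)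
  · intro p hp
    simp only [Finset.mem_filter, Finset.mem_univ, true_and] at hp
    have hne : p.1 ≠ p.2 := hp.ne
    have hf1 : ({p.1, p.2} : Finset (Fin k)).filter (fun j => p.1 < j) = {p.2} := by
      ext y
      simp only [Finset.mem_filter, Finset.mem_insert, Finset.mem_singleton]
      constructor
      · rintro ⟨h | h, hlt⟩
        · subst h; exact absurd hlt (lt_irrefl _)
        · exact h
      · rintro rfl; exact ⟨Or.inr rfl, hp⟩
    have hf2 : ({p.1, p.2} : Finset (Fin k)).filter (fun j => p.2 < j) = ∅ := by
      ext y
      simp only [Finset.mem_filter, Finset.mem_insert, Finset.mem_singleton,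
        Finset.notMem_empty, iff_false, not_and]
      rintro (rfl | rfl)
      · exact fun h => absurd (hp.trans h) (lt_irrefl _)
      · exact lt_irrefl _
    rw [Finset.prod_pair hne, Finset.prod_pair hne, hf1, hf2]
    simp

lemma aux_two_mul (k : ℕ) (x : Fin k → ℝ) :
    2 * ∑ p ∈ Finset.univ.filter (fun p : Fin k × Fin k => p.1 < p.2), x p.1 * x p.2
      = (∑ i, x i) ^ 2 - ∑ i, (x i) ^ 2 := by
  have h0 : (∑ i, x i) ^ 2 = ∑ p : Fin k × Fin k, x p.1 * x p.2 := by
    rw [sq, Finset.sum_mul_sum, Fintype.sum_prod_type]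
  have e1 := Finset.sum_filter_add_sum_filter_not (Finset.univ : Finset (Fin k × Fin k))
    (fun p => p.1 < p.2) (fun p => x p.1 * x p.2)
  have e2 := Finset.sum_filter_add_sum_filter_not
    (Finset.univ.filter (fun p : Fin k × Fin k => ¬ p.1 < p.2))
    (fun p => p.2 < p.1) (fun p => x p.1 * x p.2)
  have hff1 : (Finset.univ.filter (fun p : Fin k × Fin k => ¬ p.1 < p.2)).filter
      (fun p => p.2 < p.1) = Finset.univ.filter (fun p : Fin k × Fin k => p.2 < p.1) := by
    rw [Finset.filter_filter]
    apply Finset.filter_congr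
    intro p _
    constructor
    · exact fun h => h.2
    · exact fun h => ⟨asymm h, h⟩
  have hff2 : (Finset.univ.filter (fun p : Fin k × Fin k => ¬ p.1 < p.2)).filter
      (fun p => ¬ p.2 < p.1) = Finset.univ.filter (fun p : Fin k × Fin k => p.1 = p.2) := by
    rw [Finset.filter_filter]
    apply Finset.filter_congr
    intro p _
    constructor
    · exact fun h => le_antisymm (not_lt.mp h.2) (not_lt.mp h.1)
    · exact fun h => ⟨fun hl => ne_of_lt hl h, fun hl => ne_of_gt hl h⟩
  have e3 : ∑ p ∈ Finset.univ.filter (fun p : Fin k × Fin k => p.2 < p.1), x p.1 * x p.2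
      = ∑ p ∈ Finset.univ.filter (fun p : Fin k × Fin k => p.1 < p.2), x p.1 * x p.2 := by
    refine Finset.sum_bij' (i := fun p _ => Prod.swap p) (j := fun p _ => Prod.swap p)
      ?_ ?_ ?_ ?_ ?_
    · intro p hp
      simp only [Finset.mem_filter, Finset.mem_univ, true_and, Prod.fst_swap,
        Prod.snd_swap] at hp ⊢
      exact hp
    · intro p hp
      simp only [Finset.mem_filter, Finset.mem_univ, true_and, Prod.fst_swap,
        Prod.snd_swap] at hp ⊢
      exact hp
    · intro p _; exact Prod.swap_swap p
    · intro p _; exact Prod.swap_swap p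
    · intro p _
      simp only [Prod.fst_swap, Prod.snd_swap]
      ring
  have e4 : ∑ p ∈ Finset.univ.filter (fun p : Fin k × Fin k => p.1 = p.2), x p.1 * x p.2
      = ∑ i, (x i) ^ 2 := by
    refine Finset.sum_bij' (i := fun p _ => p.1) (j := fun a _ => (a, a)) ?_ ?_ ?_ ?_ ?_
    · intro p hp; exact Finset.mem_univ _
    · intro a _; simp
    · intro p hp
      simp only [Finset.mem_filter, Finset.mem_univ, true_and] at hp
      exact Prod.ext rfl hp
    · intro a _; rfl
    · intro p hp
      simp only [Finset.mem_filter, Finset.mem_univ, true_and] at hp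
      rw [← hp]; ring
  rw [hff1, hff2, e3, e4] at e2
  rw [h0, ← e1, ← e2]
  ring

lemma aux_card_filter_lt (k m : ℕ) (hm : m ≤ k) :
    (Finset.univ.filter (fun i : Fin k => (i : ℕ) < m)).card = m := by
  have h : Finset.univ.filter (fun i : Fin k => (i : ℕ) < m)
      = Finset.univ.map ⟨Fin.castLE hm, Fin.castLE_injective hm⟩ := by
    ext i
    simp only [Finset.mem_filter, Finset.mem_univ, true_and, Finset.mem_map,
      Function.Embedding.coeFn_mk]
    constructor
    · intro hi
      exact ⟨⟨(i : ℕ), hi⟩, by ext; simp [Fin.castLE]⟩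
    · rintro ⟨j, rfl⟩
      simpa using j.isLt
  rw [h, Finset.card_map, Finset.card_univ, Fintype.card_fin]

theorem phi_eq_zero_of_xi_lt (c : ℝ) (hc : c ∈ Set.Ioo (0 : ℝ) (1 / 2)) (n r : ℕ)
    (hr : 3 ≤ r) (hrn : r ≤ n) (hxi : xi c < r) :
    phi r n c = 0 := by
  obtain ⟨hc0, hc2⟩ := hc
  set m := xi c with hmdef
  have h12 : (0 : ℝ) < 1 - 2 * c := by linarith
  have hval : (1 : ℝ) < 1 / (1 - 2 * c) := by
    rw [lt_div_iff₀ h12]; linarith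
  have hm2 : 2 ≤ m := by
    have h1 : (1 : ℕ) < m := Nat.lt_ceil.mpr (by exact_mod_cast hval)
    omega
  have hmge : 1 / (1 - 2 * c) ≤ (m : ℝ) := Nat.le_ceil _
  have hmR : (2 : ℝ) ≤ (m : ℝ) := by exact_mod_cast hm2
  have hm0 : (m : ℝ) ≠ 0 := by linarith
  have hm1 : (m : ℝ) - 1 ≠ 0 := by linarith
  set t : ℝ := 2 * c * m / ((m : ℝ) - 1) with htdef
  have ht0 : 0 ≤ t := by
    apply div_nonneg
    · positivity
    · linarith
  have ht1 : t ≤ 1 := by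
    rw [htdef, div_le_one (by linarith : (0 : ℝ) < (m : ℝ) - 1)]
    have h1 : 1 ≤ (m : ℝ) * (1 - 2 * c) := (div_le_iff₀ h12).mp hmge
    nlinarith
  set A : Fin r → Fin r → ℝ :=
    fun i j => if i = j then 0 else if (i : ℕ) < m ∧ (j : ℕ) < m then t else 0 with hAdef
  set x : Fin r → ℝ := fun i => if (i : ℕ) < m then 1 / (m : ℝ) else 0 with hxdef
  have hcard := aux_card_filter_lt r m (le_of_lt hxi)
  have hsum1 : ∑ i, x i = 1 := by
    have h : ∑ i, x i = ∑ i ∈ Finset.univ.filter (fun i : Fin r => (i : ℕ) < m), 1 / (m : ℝ) :=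
      (Finset.sum_filter _ _).symm
    rw [h, Finset.sum_const, hcard, nsmul_eq_mul]
    field_simp
  have hsumsq : ∑ i, (x i) ^ 2 = 1 / (m : ℝ) := by
    have h : ∀ i, (x i) ^ 2 = if (i : ℕ) < m then (1 / (m : ℝ)) ^ 2 else 0 := by
      intro i
      by_cases hi : (i : ℕ) < m <;> simp [hxdef, hi]
    rw [Finset.sum_congr rfl (fun i _ => h i), ← Finset.sum_filter, Finset.sum_const, hcard,
      nsmul_eq_mul]
    field_simp
  have hxnn : ∀ i, 0 ≤ x i := by
    intro i
    rw [hxdef]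
    dsimp only
    split
    · positivity
    · exact le_rfl
  have hL1 : L r 1 A x = 1 := by rw [aux_L_one]; exact hsum1
  have hL2 : L r 2 A x = c := by
    rw [aux_L_two]
    have hpt : ∀ p ∈ Finset.univ.filter (fun p : Fin r × Fin r => p.1 < p.2),
        A p.1 p.2 * (x p.1 * x p.2) = t * (x p.1 * x p.2) := by
      intro p hp
      simp only [Finset.mem_filter, Finset.mem_univ, true_and] at hp
      by_cases h1 : (p.1 : ℕ) < m <;> by_cases h2 : (p.2 : ℕ) < m <;>
        simp [hAdef, hxdef, hp.ne, h1, h2]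
    rw [Finset.sum_congr rfl hpt, ← Finset.mul_sum]
    have h2m := aux_two_mul r x
    rw [hsum1, hsumsq] at h2m
    have hS : ∑ p ∈ Finset.univ.filter (fun p : Fin r × Fin r => p.1 < p.2), x p.1 * x p.2
        = (1 - 1 / (m : ℝ)) / 2 := by linarith
    rw [hS, htdef]
    field_simp
  have hmemS : memS r c A x := by
    refine ⟨fun i => by simp [hAdef], ?_, ?_, ?_, hxnn, hL1, hL2⟩
    · intro i j
      rw [hAdef]
      dsimp only
      split
      · exact le_rfl
      · split
        · exact ht0
        · exact le_rfl
    · intro i j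
      rw [hAdef]
      dsimp only
      split
      · exact zero_le_one
      · split
        · exact ht1
        · exact zero_le_one
    · intro i j
      rw [hAdef]
      dsimp only
      rcases eq_or_ne i j with rfl | h
      · rfl
      · rw [if_neg h, if_neg (Ne.symm h)]
        exact if_congr and_comm rfl rfl
  have hLr0 : L r r A x = 0 := by
    rw [L]
    apply Finset.sum_eq_zero
    intro X hX
    rw [Finset.mem_powersetCard] at hX
    have hex : ∃ i ∈ X, ¬ (i : ℕ) < m := by
      by_contra h
      push_neg at h
      have hsub : X ⊆ Finset.univ.filter (fun i : Fin r => (i : ℕ) < m) :=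
        fun i hi => Finset.mem_filter.mpr ⟨Finset.mem_univ _, h i hi⟩
      have hle := Finset.card_le_card hsub
      rw [hcard, hX.2] at hle
      omega
    obtain ⟨i, hiX, hi⟩ := hex
    have hz : ∏ i ∈ X, x i = 0 := Finset.prod_eq_zero hiX (by simp [hxdef, hi])
    rw [hz, mul_zero]
  have h0mem : (0 : ℝ) ∈ {v : ℝ | ∃ k, r ≤ k ∧ k ≤ n ∧ ∃ (A : Fin k → Fin k → ℝ)
      (x : Fin k → ℝ), memS k c A x ∧ L k r A x = v} :=
    ⟨r, le_rfl, hrn, A, x, hmemS, hLr0⟩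
  have hlb : ∀ v ∈ {v : ℝ | ∃ k, r ≤ k ∧ k ≤ n ∧ ∃ (A : Fin k → Fin k → ℝ)
      (x : Fin k → ℝ), memS k c A x ∧ L k r A x = v}, (0 : ℝ) ≤ v := by
    rintro v ⟨k, -, -, A', x', hm', rfl⟩
    apply Finset.sum_nonneg
    intro X _
    apply mul_nonneg
    · apply Finset.prod_nonneg
      intro i _
      apply Finset.prod_nonneg
      intro j _
      exact hm'.2.1 i j
    · exact Finset.prod_nonneg (fun i _ => hm'.2.2.2.2.1 i)
  rw [phi]
  exact le_antisymm (csInf_le ⟨0, hlb⟩ h0mem) (le_csInf ⟨0, h0mem⟩ hlb)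
end

section
/- For every integer r ≥ 3, the function c ↦ φ_r(c) is continuous on the open interval (0, 1/2). -/
/-!
On the interval `(xiBreak s, xiBreak (s + 1)]`, with `xiBreak s = (s - 1) / (2 s)`, the integer
`ξ(c)` is constant, equal to `s + 1`, so `φ_r` agrees there with the continuous function
`phiAt r (s + 1)` obtained by freezing `ξ`. At a breakpoint `c = xiBreak s` the two neighbouring
formulas agree: for `s` the square root vanishes and `x = y = 1/s`, while for `s + 1` it equals
`1/s`, giving `x = 1/s` and `y = 0`; both values are then `C(s, r) / s^r` by Pascal's rule.
-/

open Set Filter Topology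

theorem ContinuousAt.of_eqOn_Ioc_Ioc {α β : Type*} [LinearOrder α] [TopologicalSpace α]
    [OrderTopology α] [TopologicalSpace β] {f g h : α → β} {a b d : α} (hab : a < b)
    (hbd : b < d) (hfg : EqOn f g (Ioc a b)) (hfh : EqOn f h (Ioc b d)) (hg : ContinuousAt g b)
    (hh : ContinuousAt h b) (hgh : g b = h b) : ContinuousAt f b := by
  refine continuousAt_iff_continuous_left_right.2 ⟨?_, continuousWithinAt_Ioi_iff_Ici.1 ?_⟩
  · exact hg.continuousWithinAt.congr_of_eventuallyEq
      (mem_of_superset (Ioc_mem_nhdsLE hab) hfg) (hfg ⟨hab, le_rfl⟩)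
  · exact hh.continuousWithinAt.congr_of_eventuallyEq
      (mem_of_superset (Ioc_mem_nhdsGT hbd) hfh) ((hfg ⟨hab, le_rfl⟩).trans hgh)

noncomputable def rootAt (s : ℕ) (c : ℝ) : ℝ := √(1 - 2 * s * c / (s - 1))

noncomputable def xAt (s : ℕ) (c : ℝ) : ℝ := 1 / s + 1 / s * rootAt s c

noncomputable def yAt (s : ℕ) (c : ℝ) : ℝ := 1 / s - (s - 1) / s * rootAt s c

noncomputable def phiAt (r s : ℕ) (c : ℝ) : ℝ :=
  ((s - 1).choose r : ℝ) * xAt s c ^ r +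
    ((s - 1).choose (r - 1) : ℝ) * xAt s c ^ (r - 1) * yAt s c

theorem phiF_eq_phiAt (r : ℕ) (c : ℝ) : phiF r c = phiAt r (xi c) c := rfl

theorem continuous_phiAt (r s : ℕ) : Continuous (phiAt r s) := by
  unfold phiAt xAt yAt rootAt
  fun_prop

noncomputable def xiBreak (s : ℕ) : ℝ := (s - 1) / (2 * s)

theorem xiBreak_lt_half {s : ℕ} (hs : 1 ≤ s) : xiBreak s < 1 / 2 := by
  have : (1 : ℝ) ≤ s := by exact_mod_cast hs
  rw [xiBreak, div_lt_iff₀ (by positivity)]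
  linarith

theorem xiBreak_lt_xiBreak_succ {s : ℕ} (hs : 1 ≤ s) : xiBreak s < xiBreak (s + 1) := by
  have : (1 : ℝ) ≤ s := by exact_mod_cast hs
  rw [xiBreak, xiBreak, div_lt_div_iff₀ (by positivity) (by positivity)]
  push_cast
  nlinarith

theorem xi_le_iff {c : ℝ} (hc : c < 1 / 2) {s : ℕ} (hs : 1 ≤ s) :
    xi c ≤ s ↔ c ≤ xiBreak s := by
  have : (1 : ℝ) ≤ s := by exact_mod_cast hs
  rw [xi, Nat.ceil_le, div_le_iff₀ (by linarith), xiBreak, le_div_iff₀ (by positivity)]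
  constructor <;> intro <;> linarith

theorem one_lt_xi {c : ℝ} (hc : c ∈ Ioo 0 (1 / 2)) : 1 < xi c := by
  rw [xi, Nat.lt_ceil, Nat.cast_one, lt_div_iff₀ (by linarith [hc.2])]
  linarith [hc.1]

theorem xi_eq_succ {c : ℝ} {s : ℕ} (hs : 1 ≤ s)
    (hc : c ∈ Ioc (xiBreak s) (xiBreak (s + 1))) :
    xi c = s + 1 := by
  have hc' : c < 1 / 2 := hc.2.trans_lt (xiBreak_lt_half (by omega))
  have hle := (xi_le_iff hc' (by omega)).2 hc.2
  have hgt := mt (xi_le_iff hc' hs).1 hc.1.not_ge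
  omega

theorem exists_mem_Ioc_xiBreak {c : ℝ} (hc : c ∈ Ioo 0 (1 / 2)) :
    ∃ s, 1 ≤ s ∧ c ∈ Ioc (xiBreak s) (xiBreak (s + 1)) := by
  have h1 := one_lt_xi hc
  refine ⟨xi c - 1, by omega, ?_, ?_⟩
  · exact not_le.1 fun h ↦ by have := (xi_le_iff hc.2 (by omega)).2 h; omega
  · exact (xi_le_iff hc.2 (by omega)).1 (by omega)

theorem eqOn_phiF_phiAt (r : ℕ) {s : ℕ} (hs : 1 ≤ s) :
    EqOn (phiF r) (phiAt r (s + 1)) (Ioc (xiBreak s) (xiBreak (s + 1))) := fun c hc ↦ by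
  rw [phiF_eq_phiAt, xi_eq_succ hs hc]

theorem rootAt_xiBreak {s : ℕ} (hs : 2 ≤ s) : rootAt s (xiBreak s) = 0 := by
  have hs0 : (s : ℝ) ≠ 0 := by positivity
  have hs1 : (s : ℝ) - 1 ≠ 0 := by
    have : (2 : ℝ) ≤ s := by exact_mod_cast hs
    linarith
  have harg : 1 - 2 * s * xiBreak s / (s - 1) = 0 := by
    rw [xiBreak]
    field_simp
    ring
  rw [rootAt, harg, Real.sqrt_zero]

theorem rootAt_succ_xiBreak {s : ℕ} (hs : 1 ≤ s) : rootAt (s + 1) (xiBreak s) = 1 / s := by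
  have hs0 : (s : ℝ) ≠ 0 := by positivity
  rw [rootAt, xiBreak, ← Real.sqrt_sq (by positivity : (0 : ℝ) ≤ 1 / s)]
  push_cast
  rw [add_sub_cancel_right]
  congr 1
  field_simp
  ring

theorem phiAt_succ_xiBreak {r s : ℕ} (hr : 1 ≤ r) (hs : 2 ≤ s) :
    phiAt r (s + 1) (xiBreak s) = phiAt r s (xiBreak s) := by
  have hx : xAt (s + 1) (xiBreak s) = xAt s (xiBreak s) := by
    rw [xAt, xAt, rootAt_succ_xiBreak (by omega), rootAt_xiBreak hs]
    push_cast
    field_simp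
    ring
  have hy : yAt (s + 1) (xiBreak s) = 0 := by
    rw [yAt, rootAt_succ_xiBreak (by omega)]
    push_cast
    field_simp
    ring
  have hxy : yAt s (xiBreak s) = xAt s (xiBreak s) := by
    rw [xAt, yAt, rootAt_xiBreak hs]
    ring
  obtain ⟨n, rfl⟩ : ∃ n, r = n + 1 := ⟨r - 1, by omega⟩
  obtain ⟨m, rfl⟩ : ∃ m, s = m + 1 := ⟨s - 1, by omega⟩
  rw [phiAt, phiAt, hx, hy, hxy, Nat.add_sub_cancel, Nat.add_sub_cancel, Nat.add_sub_cancel,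
    Nat.choose_succ_succ']
  push_cast
  ring

theorem phiF_continuous (r : ℕ) (hr : 3 ≤ r) :
    ContinuousOn (phiF r) (Set.Ioo (0 : ℝ) (1 / 2)) := by
  refine continuousOn_of_forall_continuousAt fun c hc ↦ ?_
  obtain ⟨s, hs, hlo, hhi⟩ := exists_mem_Ioc_xiBreak hc
  rcases hhi.lt_or_eq with hlt | rfl
  · have hEq : phiAt r (s + 1) =ᶠ[𝓝 c] phiF r :=
      mem_of_superset (Ioo_mem_nhds hlo hlt) fun c' hc' ↦
        (eqOn_phiF_phiAt r hs (Ioo_subset_Ioc_self hc')).symm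
    exact (continuous_phiAt r (s + 1)).continuousAt.congr hEq
  · exact .of_eqOn_Ioc_Ioc hlo (xiBreak_lt_xiBreak_succ (by omega)) (eqOn_phiF_phiAt r hs)
      (eqOn_phiF_phiAt r (by omega)) (continuous_phiAt r _).continuousAt
      (continuous_phiAt r _).continuousAt (phiAt_succ_xiBreak (by omega) (by omega)).symm
end

section
/- For every integer r ≥ 3, φ_r(c) = 0 for all c ∈ (0, 1/4]; moreover, the function φ_3 is strictly increasing on the interval (1/4, 1/2). -/
/-! For `c ≤ 1/4` we have `ξ(c) = 2`, so both binomial coefficients `C(1, r)` and `C(1, r - 1)`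
vanish once `r ≥ 3`.

On `(1/4, 1/2)` write `s = ξ(c) ≥ 3` and `t = √(1 - 2sc/(s-1))`. Then `x = (1 + t)/s`,
`y = (1 - (s-1)t)/s` and `φ_3 = (s-1)(s-2)/(6s²) · (1+t)²(1-2t)`. While `ξ` is constant, `t`
decreases in `c` and `(1+t)²(1-2t)` decreases in `t ≥ 0`, so `φ_3` increases. Where `ξ` jumps,
the ceiling gives `0 ≤ t < 1/(s-1)`, and at `t = 1/(s-1)` the formula for `s` takes the value of
the formula for `s - 1` at `t = 0`; as `(s-1)(s-2)/s²` increases in `s`, the jump is upwards. -/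

lemma Nat.cast_choose_three {K : Type*} [Field K] [CharZero K] (a : ℕ) :
    (a.choose 3 : K) = a * (a - 1) * (a - 2) / 6 := by
  simp [Nat.cast_choose_eq_descPochhammer_div, descPochhammer_succ_right, Nat.factorial]

section Xi

variable {c : ℝ}

lemma one_le_xi_mul (hc : c < 1 / 2) : 1 ≤ (xi c : ℝ) * (1 - 2 * c) := by
  have := Nat.le_ceil (1 / (1 - 2 * c))
  rwa [div_le_iff₀ (by linarith)] at this

lemma xi_sub_one_mul_lt (hc : c < 1 / 2) : ((xi c : ℝ) - 1) * (1 - 2 * c) < 1 := by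
  have := Nat.ceil_lt_add_one (show 0 ≤ 1 / (1 - 2 * c) by rw [one_div_nonneg]; linarith)
  rw [← lt_div_iff₀ (by linarith)]
  unfold xi
  linarith

lemma xi_eq_two (hc : c ∈ Set.Ioc (0 : ℝ) (1 / 4)) : xi c = 2 := by
  obtain ⟨h0, h4⟩ := hc
  have := one_le_xi_mul (c := c) (by linarith)
  have := xi_sub_one_mul_lt (c := c) (by linarith)
  have h1 : 1 < xi c := by exact_mod_cast (show (1 : ℝ) < xi c by nlinarith)
  have h3 : xi c < 3 := by exact_mod_cast (show (xi c : ℝ) < 3 by nlinarith)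
  omega

lemma three_le_xi (hc : c ∈ Set.Ioo (1 / 4 : ℝ) (1 / 2)) : 3 ≤ xi c := by
  obtain ⟨h4, h2⟩ := hc
  have := xi_sub_one_mul_lt h2
  have : (2 : ℝ) < xi c := by nlinarith [one_le_xi_mul h2]
  exact_mod_cast this

lemma xi_mono {c₁ c₂ : ℝ} (h : c₁ ≤ c₂) (hc₂ : c₂ < 1 / 2) : xi c₁ ≤ xi c₂ :=
  Nat.ceil_le_ceil (one_div_le_one_div_of_le (by linarith) (by linarith))

end Xi

lemma phiF_eq_zero_of_xi_eq_two {r : ℕ} {c : ℝ} (hr : 3 ≤ r) (h : xi c = 2) :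
    phiF r c = 0 := by
  simp [phiF, h, Nat.choose_eq_zero_of_lt (show 1 < r by omega),
    Nat.choose_eq_zero_of_lt (show 1 < r - 1 by omega)]

section Sqc

variable {c : ℝ}

lemma sqc_radicand_nonneg (hc : c ∈ Set.Ioo (1 / 4 : ℝ) (1 / 2)) :
    0 ≤ 1 - 2 * (xi c : ℝ) * c / ((xi c : ℝ) - 1) := by
  have hs : (3 : ℝ) ≤ xi c := by exact_mod_cast three_le_xi hc
  rw [sub_nonneg, div_le_one (by linarith)]
  linarith [one_le_xi_mul hc.2]

lemma sqc_lt (hc : c ∈ Set.Ioo (1 / 4 : ℝ) (1 / 2)) : sqc c < 1 / ((xi c : ℝ) - 1) := by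
  have hs : (3 : ℝ) ≤ xi c := by exact_mod_cast three_le_xi hc
  have hs₁ : (0 : ℝ) < xi c - 1 := by linarith
  rw [sqc, Real.sqrt_lt' (by positivity)]
  field_simp
  nlinarith [xi_sub_one_mul_lt hc.2, hc.1]

lemma sqc_lt_sqc_of_xi_eq {c₁ c₂ : ℝ} (hc₂ : c₂ ∈ Set.Ioo (1 / 4 : ℝ) (1 / 2))
    (h : c₁ < c₂) (hxi : xi c₁ = xi c₂) : sqc c₂ < sqc c₁ := by
  have hs : (3 : ℝ) ≤ xi c₂ := by exact_mod_cast three_le_xi hc₂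
  refine Real.sqrt_lt_sqrt (sqc_radicand_nonneg hc₂) ?_
  rw [hxi]
  gcongr
  linarith

end Sqc

/-- `φ_3` as a function of `s = ξ(c)` and `t = √(1 - 2sc/(s-1))`. -/
noncomputable def phiThree (s t : ℝ) : ℝ :=
  (s - 1) * (s - 2) / (6 * s ^ 2) * ((1 + t) ^ 2 * (1 - 2 * t))

lemma phiF_three_eq {c : ℝ} (h : 1 ≤ xi c) : phiF 3 c = phiThree (xi c) (sqc c) := by
  have hs : (xi c : ℝ) ≠ 0 := by positivity
  have hcast : ((xi c - 1 : ℕ) : ℝ) = xi c - 1 := by push_cast [h]; rfl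
  simp only [phiF, phiThree, xval, yval, Nat.cast_choose_three, Nat.cast_choose_two ℝ, hcast,
    Nat.reduceSub]
  field_simp
  ring

lemma strictAntiOn_one_add_sq_mul_one_sub_two_mul :
    StrictAntiOn (fun t : ℝ ↦ (1 + t) ^ 2 * (1 - 2 * t)) (Set.Ici 0) := by
  intro t₁ (h₁ : 0 ≤ t₁) t₂ _ h
  have : 0 < 3 * (t₁ + t₂) + 2 * (t₁ ^ 2 + t₁ * t₂ + t₂ ^ 2) := by nlinarith
  show (1 + t₂) ^ 2 * (1 - 2 * t₂) < (1 + t₁) ^ 2 * (1 - 2 * t₁)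
  nlinarith [mul_pos (sub_pos.mpr h) this]

section PhiThree

variable {s t : ℝ}

lemma phiThree_lt_phiThree (hs : 2 < s) {t₁ t₂ : ℝ} (h₁ : 0 ≤ t₁) (h : t₁ < t₂) :
    phiThree s t₂ < phiThree s t₁ := by
  have : 0 < (s - 1) * (s - 2) / (6 * s ^ 2) := by
    apply div_pos <;> nlinarith
  exact mul_lt_mul_of_pos_left
    (strictAntiOn_one_add_sq_mul_one_sub_two_mul h₁ (Set.mem_Ici.mpr (h₁.trans h.le)) h) this

lemma phiThree_le_phiThree_zero (hs : 2 ≤ s) (ht : 0 ≤ t) : phiThree s t ≤ phiThree s 0 := by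
  have : 0 ≤ (s - 1) * (s - 2) / (6 * s ^ 2) := by
    apply div_nonneg <;> nlinarith
  exact mul_le_mul_of_nonneg_left
    (strictAntiOn_one_add_sq_mul_one_sub_two_mul.antitoneOn Set.self_mem_Ici ht ht) this

lemma phiThree_zero_le_phiThree_zero {a b : ℝ} (ha : 2 ≤ a) (hab : a ≤ b) :
    phiThree a 0 ≤ phiThree b 0 := by
  have : 0 < a := by linarith
  have : 0 < b := by linarith
  simp only [phiThree]
  rw [div_mul_eq_mul_div, div_mul_eq_mul_div, div_le_div_iff₀ (by positivity) (by positivity)]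
  nlinarith [mul_nonneg (sub_nonneg.mpr hab) (show 0 ≤ 3 * a * b - 2 * a - 2 * b by nlinarith)]

lemma phiThree_inv_sub_one (hs : 1 < s) : phiThree s (1 / (s - 1)) = phiThree (s - 1) 0 := by
  have : s - 1 ≠ 0 := by linarith
  have : s ≠ 0 := by linarith
  simp only [phiThree]
  field_simp
  ring

end PhiThree

theorem phiF_zero_and_increasing (r : ℕ) (hr : 3 ≤ r) :
    (∀ c ∈ Set.Ioc (0 : ℝ) (1 / 4), phiF r c = 0) ∧
      StrictMonoOn (phiF 3) (Set.Ioo (1 / 4 : ℝ) (1 / 2)) := by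
  refine ⟨fun c hc ↦ phiF_eq_zero_of_xi_eq_two hr (xi_eq_two hc),
    fun c₁ hc₁ c₂ hc₂ h ↦ ?_⟩
  have hxi₁ := three_le_xi hc₁
  have hxi₂ := three_le_xi hc₂
  have ha : (3 : ℝ) ≤ xi c₁ := by exact_mod_cast hxi₁
  have hb : (3 : ℝ) ≤ xi c₂ := by exact_mod_cast hxi₂
  rw [phiF_three_eq (by omega), phiF_three_eq (by omega)]
  rcases (xi_mono h.le hc₂.2).eq_or_lt with heq | hlt
  · rw [heq]
    exact phiThree_lt_phiThree (by linarith) (Real.sqrt_nonneg _)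
      (sqc_lt_sqc_of_xi_eq hc₂ h heq)
  · have hab : (xi c₁ : ℝ) ≤ xi c₂ - 1 := by
      rw [le_sub_iff_add_le]; exact_mod_cast hlt
    calc phiThree (xi c₁) (sqc c₁)
        ≤ phiThree (xi c₁) 0 := phiThree_le_phiThree_zero (by linarith) (Real.sqrt_nonneg _)
      _ ≤ phiThree (xi c₂ - 1) 0 := phiThree_zero_le_phiThree_zero (by linarith) hab
      _ = phiThree (xi c₂) (1 / (xi c₂ - 1)) := (phiThree_inv_sub_one (by linarith)).symm
      _ < phiThree (xi c₂) (sqc c₂) :=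
        phiThree_lt_phiThree (by linarith) (Real.sqrt_nonneg _) (sqc_lt hc₂)
end

section
/- For every integer r ≥ 3 and every integer s ≥ 2, the function φ_r is concave on the open interval ((s−1)/(2s), s/(2(s+1))). -/
/-!
On the interval `ξ(c) = s + 1`, and the coordinates of `x_c` sum to one (`s x + y = 1`), so
`φ_r(c) = P(x(c))` with `P(x) = C(s, r) x^r + C(s, r-1) x^(r-1) (1 - s x)`,
`x(c) = (1 + T(c)) / (s + 1)` and `T(c) = √(1 - 2(s+1)c/s)`. The identity
`(k+1) C(s, k+1) = (s-k) C(s, k)` collapses `P'(x)` to `-(r-1) C(s, r-1) x^(r-2) T`, and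
`T T' = -(s+1)/s`, so `φ_r'(c) = (r-1) C(s, r-1) x(c)^(r-2) / s`. Since `x` is nonnegative and
decreasing in `c`, `φ_r'` is antitone.
-/

open Set

theorem Nat.cast_choose_succ_mul {R : Type*} [CommRing R] (n k : ℕ) :
    (n.choose (k + 1) : R) * (k + 1) = n.choose k * (n - k) := by
  rcases le_or_gt k n with h | h
  · have := congrArg (Nat.cast : ℕ → R) (Nat.choose_succ_right_eq n k)
    push_cast [h] at this
    exact this
  · simp [Nat.choose_eq_zero_of_lt h, Nat.choose_eq_zero_of_lt (h.trans k.lt_succ_self)]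

section phiPoly

variable {𝕜 : Type*} [NontriviallyNormedField 𝕜]

def phiPoly (n m : ℕ) (x : 𝕜) : 𝕜 :=
  n.choose (m + 2) * x ^ (m + 2) + n.choose (m + 1) * x ^ (m + 1) * (1 - n * x)

theorem hasDerivAt_phiPoly (n m : ℕ) (x : 𝕜) :
    HasDerivAt (phiPoly n m) ((m + 1) * n.choose (m + 1) * x ^ m * (1 - (n + 1) * x)) x := by
  have h := (((hasDerivAt_pow (m + 2) x).const_mul (n.choose (m + 2) : 𝕜)).add
    (((hasDerivAt_pow (m + 1) x).const_mul (n.choose (m + 1) : 𝕜)).mul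
      (((hasDerivAt_id x).const_mul (n : 𝕜)).const_sub 1)))
  refine h.congr_deriv ?_
  have hc := Nat.cast_choose_succ_mul (R := 𝕜) n (m + 1)
  push_cast at hc ⊢
  simp only [id]
  linear_combination x ^ (m + 1) * hc

end phiPoly

-- `sqc` and `xval` with `ξ(c)` replaced by its value `s + 1` on the interval of the theorem
noncomputable def sqcOf (s : ℕ) (c : ℝ) : ℝ := √(1 - 2 * (s + 1) * c / s)

noncomputable def xvalOf (s : ℕ) (c : ℝ) : ℝ := (1 + sqcOf s c) / (s + 1)

theorem antitone_sqcOf (s : ℕ) : Antitone (sqcOf s) := fun c d hcd => by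
  unfold sqcOf
  gcongr

theorem antitone_xvalOf (s : ℕ) : Antitone (xvalOf s) := fun c d hcd => by
  unfold xvalOf
  gcongr
  exact antitone_sqcOf s hcd

theorem xvalOf_nonneg (s : ℕ) (c : ℝ) : 0 ≤ xvalOf s c := by
  unfold xvalOf sqcOf
  positivity

theorem hasDerivAt_xvalOf {s : ℕ} (hs : 0 < s) {c : ℝ} (hc : 2 * (s + 1) * c < s) :
    HasDerivAt (xvalOf s) (-1 / (s * sqcOf s c)) c := by
  have hs' : (0 : ℝ) < s := by exact_mod_cast hs
  have hu : 0 < 1 - 2 * (s + 1) * c / s := by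
    rw [sub_pos, div_lt_one hs']
    exact hc
  have ht : 0 < sqcOf s c := Real.sqrt_pos.2 hu
  have h := ((((hasDerivAt_id c).const_mul (2 * ((s : ℝ) + 1))).div_const (s : ℝ)).const_sub
    1).sqrt hu.ne' |>.const_add 1 |>.div_const ((s : ℝ) + 1)
  refine h.congr_deriv ?_
  simp only [id]
  rw [← sqcOf]
  field_simp

theorem pos_of_mem_Ioo {s : ℕ} {c : ℝ}
    (hc : c ∈ Ioo (((s : ℝ) - 1) / (2 * s)) (s / (2 * (s + 1)))) : 0 < s := by
  rcases Nat.eq_zero_or_pos s with rfl | h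
  · simp at hc
  · exact h

theorem xi_eq_of_mem_Ioo {s : ℕ} {c : ℝ}
    (hc : c ∈ Ioo (((s : ℝ) - 1) / (2 * s)) (s / (2 * (s + 1)))) : xi c = s + 1 := by
  have hs : (0 : ℝ) < s := by exact_mod_cast pos_of_mem_Ioo hc
  have hlo := (div_lt_iff₀ (by positivity)).1 hc.1
  have hhi := (lt_div_iff₀ (by positivity)).1 hc.2
  have h2c : 0 < 1 - 2 * c := by nlinarith
  rw [xi, Nat.ceil_eq_iff (Nat.succ_ne_zero s), lt_div_iff₀ h2c, div_le_iff₀ h2c]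
  push_cast
  constructor <;> nlinarith

theorem phiF_eq_phiPoly {s : ℕ} (m : ℕ) {c : ℝ}
    (hc : c ∈ Ioo (((s : ℝ) - 1) / (2 * s)) (s / (2 * (s + 1)))) :
    phiF (m + 2) c = phiPoly s m (xvalOf s c) := by
  have hxi := xi_eq_of_mem_Ioo hc
  have hsqc : sqc c = sqcOf s c := by
    rw [sqc, sqcOf, hxi]
    push_cast
    ring_nf
  rw [phiF, phiPoly, xval, yval, hsqc, hxi, xvalOf]
  push_cast
  field_simp
  ring

theorem hasDerivAt_phiF {s : ℕ} (m : ℕ) {c : ℝ}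
    (hc : c ∈ Ioo (((s : ℝ) - 1) / (2 * s)) (s / (2 * (s + 1)))) :
    HasDerivAt (phiF (m + 2)) ((m + 1) * s.choose (m + 1) / s * xvalOf s c ^ m) c := by
  have hs := pos_of_mem_Ioo hc
  have hs' : (0 : ℝ) < s := by exact_mod_cast hs
  have hhi : 2 * ((s : ℝ) + 1) * c < s := by
    have := (lt_div_iff₀ (by positivity)).1 hc.2
    linarith
  have ht : 0 < sqcOf s c := Real.sqrt_pos.2 (by rw [sub_pos, div_lt_one hs']; exact hhi)
  have h := (hasDerivAt_phiPoly s m (xvalOf s c)).comp c (hasDerivAt_xvalOf hs hhi)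
  refine (h.congr_of_eventuallyEq ?_).congr_deriv ?_
  · filter_upwards [isOpen_Ioo.mem_nhds hc] with d hd
    exact phiF_eq_phiPoly m hd
  · have hx : 1 - ((s : ℝ) + 1) * xvalOf s c = -sqcOf s c := by
      rw [xvalOf]
      field_simp
      ring
    rw [hx]
    field_simp

theorem phiF_concave_general (r : ℕ) (hr : 3 ≤ r) (s : ℕ) :
    ConcaveOn ℝ (Set.Ioo (((s : ℝ) - 1) / (2 * (s : ℝ))) ((s : ℝ) / (2 * ((s : ℝ) + 1))))
      (phiF r) := by
  obtain ⟨m, rfl⟩ : ∃ m, r = m + 2 := ⟨r - 2, by omega⟩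
  have hderiv := fun c (hc : c ∈ Ioo _ _) => hasDerivAt_phiF (s := s) m hc
  refine AntitoneOn.concaveOn_of_deriv (convex_Ioo _ _)
    (fun c hc => (hderiv c hc).continuousAt.continuousWithinAt) ?_ ?_ <;> rw [interior_Ioo]
  · exact fun c hc => (hderiv c hc).differentiableAt.differentiableWithinAt
  · intro c hc d hd hcd
    rw [(hderiv c hc).deriv, (hderiv d hd).deriv]
    gcongr
    · exact xvalOf_nonneg s d
    · exact antitone_xvalOf s hcd

theorem phiF_concave (r : ℕ) (hr : 3 ≤ r) (s : ℕ) (hs : 2 ≤ s) :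
    ConcaveOn ℝ (Set.Ioo (((s : ℝ) - 1) / (2 * (s : ℝ))) ((s : ℝ) / (2 * ((s : ℝ) + 1))))
      (phiF r) :=
  phiF_concave_general r hr s
end

section
/- Let a, b be real numbers with a²/4 < b ≤ a²/3, and let x₁, x₂, x₃ be positive real numbers with x₁ + x₂ + x₃ = a and x₁x₂ + x₂x₃ + x₃x₁ = b. Then x₁x₂x₃ ≥ (a/3 − (2/3)√(a² − 3b)) · (a/3 + (1/3)√(a² − 3b))². -/
lemma aux_pnn (u v w : ℝ) (hu : 0 < u) (hv : v < 0) (hw : w < 0)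
    (h1 : 0 ≤ u + v + w) (h2 : u*v + v*w + w*u = 0) : False := by
  have hvw : v + w < 0 := by linarith
  nlinarith [sq_nonneg (v - w), mul_pos hu (neg_pos.mpr hvw), mul_nonneg h1 (neg_pos.mpr hvw).le]

lemma key (u v w : ℝ) (h1 : 0 ≤ u + v + w) (h2 : u*v + v*w + w*u = 0) :
    u * v * w ≤ 0 := by
  by_contra hP
  push_neg at hP
  rcases lt_trichotomy u 0 with hu | hu | hu
  · rcases lt_trichotomy v 0 with hv | hv | hv
    · have hw : 0 < w := by nlinarith
      exact aux_pnn w u v hw hu hv (by linarith) (by linarith)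
    · nlinarith
    · rcases lt_trichotomy w 0 with hw | hw | hw
      · exact aux_pnn v w u hv hw hu (by linarith) (by linarith)
      · nlinarith
      · nlinarith [mul_pos hv hw]
  · rw [hu] at hP; simp at hP
  · rcases lt_trichotomy v 0 with hv | hv | hv
    · rcases lt_trichotomy w 0 with hw | hw | hw
      · exact aux_pnn u v w hu hv hw h1 h2
      · nlinarith
      · nlinarith [mul_pos hu hw]
    · rw [hv] at hP; simp at hP
    · rcases lt_trichotomy w 0 with hw | hw | hw
      · nlinarith [mul_pos hu hv]
      · nlinarith
      · nlinarith [mul_pos hu hv, mul_pos hv hw, mul_pos hu hw]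

theorem product_min (a b x₁ x₂ x₃ : ℝ) (hb1 : a ^ 2 / 4 < b) (hb2 : b ≤ a ^ 2 / 3)
    (h1 : 0 < x₁) (h2 : 0 < x₂) (h3 : 0 < x₃)
    (hsum : x₁ + x₂ + x₃ = a) (hprod : x₁ * x₂ + x₂ * x₃ + x₃ * x₁ = b) :
    x₁ * x₂ * x₃ ≥
      (a / 3 - 2 / 3 * Real.sqrt (a ^ 2 - 3 * b)) *
        (a / 3 + 1 / 3 * Real.sqrt (a ^ 2 - 3 * b)) ^ 2 := by
  set s := Real.sqrt (a ^ 2 - 3 * b) with hs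
  have hs0 : 0 ≤ s := Real.sqrt_nonneg _
  have hs2 : s ^ 2 = a ^ 2 - 3 * b := Real.sq_sqrt (by linarith)
  set p : ℝ := a / 3 + s / 3 with hp
  have hk := key (p - x₁) (p - x₂) (p - x₃) (by rw [hp]; linarith)
    (by rw [hp]; nlinarith [hs2, hsum, hprod])
  have hid : (a / 3 - 2 / 3 * s) * (a / 3 + 1 / 3 * s) ^ 2 - x₁ * x₂ * x₃ =
      (p - x₁) * (p - x₂) * (p - x₃) := by
    rw [hp]
    linear_combination (-(a / 3 + s / 3) / 3) * hs2 + (a / 3 + s / 3) ^ 2 * hsum -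
      (a / 3 + s / 3) * hprod
  clear_value s p
  linarith [hk, hid]
end

section
/- Let a, b be real numbers with a > 0 and 0 < b ≤ a²/4. Then for every ε > 0 there exist positive real numbers x₁, x₂, x₃ with x₁ + x₂ + x₃ = a, x₁x₂ + x₂x₃ + x₃x₁ = b, and x₁x₂x₃ < ε. In particular, the infimum of x₁x₂x₃ over all such positive triples is 0. -/
theorem product_inf_zero (a b : ℝ) (ha : 0 < a) (hb : 0 < b) (hb' : b ≤ a ^ 2 / 4) :
    (∀ ε > 0, ∃ x₁ x₂ x₃ : ℝ, 0 < x₁ ∧ 0 < x₂ ∧ 0 < x₃ ∧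
      x₁ + x₂ + x₃ = a ∧ x₁ * x₂ + x₂ * x₃ + x₃ * x₁ = b ∧ x₁ * x₂ * x₃ < ε) ∧
    sInf {p : ℝ | ∃ x₁ x₂ x₃ : ℝ, 0 < x₁ ∧ 0 < x₂ ∧ 0 < x₃ ∧
      x₁ + x₂ + x₃ = a ∧ x₁ * x₂ + x₂ * x₃ + x₃ * x₁ = b ∧ x₁ * x₂ * x₃ = p} = 0 := by
  have key : ∀ ε > 0, ∃ x₁ x₂ x₃ : ℝ, 0 < x₁ ∧ 0 < x₂ ∧ 0 < x₃ ∧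
      x₁ + x₂ + x₃ = a ∧ x₁ * x₂ + x₂ * x₃ + x₃ * x₁ = b ∧ x₁ * x₂ * x₃ < ε := by
    intro ε hε
    set t : ℝ := min (ε / b) (min (b / a) (a / 2)) / 2 with ht_def
    have h1 : 0 < ε / b := by positivity
    have h2 : 0 < b / a := by positivity
    have h3 : 0 < a / 2 := by positivity
    have ht0 : 0 < t := by
      have := lt_min h1 (lt_min h2 h3)
      positivity
    have htε : t < ε / b := by
      have := min_le_left (ε / b) (min (b / a) (a / 2))
      rw [ht_def]; linarith
    have htb : t < b / a := by
      have h := (min_le_right (ε / b) (min (b / a) (a / 2))).trans (min_le_left _ _)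
      rw [ht_def]; linarith
    have hta : t < a / 2 := by
      have h := (min_le_right (ε / b) (min (b / a) (a / 2))).trans (min_le_right _ _)
      rw [ht_def]; linarith
    clear_value t
    have hta' : t < a := by linarith
    have htab : t * a < b := (lt_div_iff₀ ha).mp htb
    have htεb : t * b < ε := by
      have := (lt_div_iff₀ hb).mp htε; linarith
    set D : ℝ := a ^ 2 - 4 * b + t * (2 * a - 3 * t) with hD_def
    have hD0 : 0 < D := by nlinarith
    set d : ℝ := Real.sqrt D with hd_def
    have hd2 : d ^ 2 = D := Real.sq_sqrt hD0.le
    have hd0 : 0 ≤ d := Real.sqrt_nonneg _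
    set s : ℝ := a - t with hs_def
    have hs0 : 0 < s := by simp only [hs_def]; linarith
    set p : ℝ := b - t * (a - t) with hp_def
    have hp0 : 0 < p := by simp only [hp_def]; nlinarith
    have hsd : s ^ 2 - 4 * p = D := by simp only [hs_def, hp_def, hD_def]; ring
    have hds : d < s := by nlinarith
    refine ⟨(s + d) / 2, (s - d) / 2, t, by linarith, by linarith, ht0, ?_, ?_, ?_⟩
    · simp only [hs_def]; ring
    · have hx12 : (s + d) / 2 * ((s - d) / 2) = p := by
        have : (s + d) / 2 * ((s - d) / 2) = (s ^ 2 - d ^ 2) / 4 := by ring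
        rw [this, hd2, ← hsd]; ring
      have : (s + d) / 2 * ((s - d) / 2) + (s - d) / 2 * t + t * ((s + d) / 2)
          = p + t * s := by rw [hx12]; ring
      rw [this]; simp only [hp_def, hs_def]; ring
    · have hx12 : (s + d) / 2 * ((s - d) / 2) = p := by
        have : (s + d) / 2 * ((s - d) / 2) = (s ^ 2 - d ^ 2) / 4 := by ring
        rw [this, hd2, ← hsd]; ring
      rw [hx12]
      have hpb : p ≤ b := by simp only [hp_def]; nlinarith
      nlinarith
  refine ⟨key, ?_⟩
  set S := {p : ℝ | ∃ x₁ x₂ x₃ : ℝ, 0 < x₁ ∧ 0 < x₂ ∧ 0 < x₃ ∧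
      x₁ + x₂ + x₃ = a ∧ x₁ * x₂ + x₂ * x₃ + x₃ * x₁ = b ∧ x₁ * x₂ * x₃ = p} with hS
  have hlb : ∀ p ∈ S, (0 : ℝ) ≤ p := by
    rintro p ⟨x₁, x₂, x₃, h₁, h₂, h₃, -, -, hp⟩
    rw [← hp]; positivity
  have hne : S.Nonempty := by
    obtain ⟨x₁, x₂, x₃, h₁, h₂, h₃, hs, hq, -⟩ := key 1 one_pos
    exact ⟨x₁ * x₂ * x₃, x₁, x₂, x₃, h₁, h₂, h₃, hs, hq, rfl⟩
  have hbdd : BddBelow S := ⟨0, hlb⟩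
  refine le_antisymm ?_ (le_csInf hne hlb)
  by_contra h
  push_neg at h
  obtain ⟨x₁, x₂, x₃, h₁, h₂, h₃, hs, hq, hlt⟩ := key (sInf S) h
  exact absurd (csInf_le hbdd ⟨x₁, x₂, x₃, h₁, h₂, h₃, hs, hq, rfl⟩) (not_le.mpr hlt)
end

section
/- Let n ≥ s ≥ r ≥ 3 be integers and let i be an integer with 0 ≤ i ≤ ⌊n/s⌋. Let H be the complete s-partite graph on n vertices whose vertex classes are one class of size i together with s−1 classes partitioning the remaining n−i vertices, each of size ⌊(n−i)/(s−1)⌋ or ⌈(n−i)/(s−1)⌉. Then k_r(H) ≤ C(s−1, r−1) · ((n−i)/(s−1))^{r−1} · i + C(s−1, r) · ((n−i)/(s−1))^r. -/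
/-!
Each `r`-clique of `H` takes at most one vertex from each class, so `k_r(H)` is at most the
elementary symmetric polynomial `e_r` of the class sizes. Splitting off the class of size `i`
gives `e_r(c) = e_r(c') + i * e_{r-1}(c')`, where `c'` are the other `s - 1` class sizes, which
sum to `n - i`. Maclaurin's inequality `e_k(x_1, …, x_m) ≤ C(m, k) * (∑ x / m) ^ k` bounds both
terms; it follows by induction on `m`, the inductive step being Bernoulli's inequality.
-/

/-- `k_r(G)`: the number of `r`-cliques of a simple graph `G`. -/
noncomputable def kcliques {V : Type*} (G : SimpleGraph V) (r : ℕ) : ℕ :=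
  {t : Finset V | G.IsNClique r t}.ncard

open Finset

theorem Multiset.esymm_cons_succ {R : Type*} [CommSemiring R] (a : R) (s : Multiset R) (k : ℕ) :
    (a ::ₘ s).esymm (k + 1) = s.esymm (k + 1) + a * s.esymm k := by
  simp [Multiset.esymm, Multiset.powersetCard_cons, Multiset.sum_map_mul_left]

section Maclaurin

variable {K : Type*} [Field K] [LinearOrder K] [IsStrictOrderedRing K]

/-- After Pascal's rule this is Bernoulli's inequality
`u ^ (k + 1) + (k + 1) * u ^ k * (v - u) ≤ v ^ (k + 1)` for the new mean `v`. -/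
theorem choose_mul_pow_add_le (m k : ℕ) {u y : K} (hu : 0 ≤ u) (hy : 0 ≤ y) :
    m.choose (k + 1) * u ^ (k + 1) + y * (m.choose k * u ^ k) ≤
      (m + 1).choose (k + 1) * ((y + m * u) / (m + 1)) ^ (k + 1) := by
  set v := (y + m * u) / (m + 1) with hv
  have hy_eq : y = (m + 1) * v - m * u := by rw [hv]; field_simp; ring
  have hv0 : 0 ≤ v := by positivity
  have hbernoulli : u ^ (k + 1) + (k + 1 : ℕ) * u ^ k * (v - u) ≤ v ^ (k + 1) := by
    simpa using pow_add_mul_le_add_pow hu (by linarith : 0 ≤ 2 * u + (v - u)) (k + 1)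
  have hpascal : ((m + 1).choose (k + 1) : K) = m.choose k + m.choose (k + 1) := by
    exact_mod_cast Nat.choose_succ_succ m k
  have habsorb : ((m + 1 : ℕ) : K) * m.choose k = (m + 1).choose (k + 1) * (k + 1 : ℕ) := by
    exact_mod_cast Nat.add_one_mul_choose_eq m k
  push_cast at hbernoulli habsorb
  calc m.choose (k + 1) * u ^ (k + 1) + y * (m.choose k * u ^ k)
      = (m + 1).choose (k + 1) * (u ^ (k + 1) + (k + 1) * u ^ k * (v - u)) := by
        rw [hy_eq]
        linear_combination (u ^ k * (v - u)) * habsorb - u ^ (k + 1) * hpascal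
    _ ≤ (m + 1).choose (k + 1) * v ^ (k + 1) :=
        mul_le_mul_of_nonneg_left hbernoulli (Nat.cast_nonneg _)

theorem Multiset.esymm_le_choose_mul_pow {s : Multiset K} (hs : ∀ x ∈ s, 0 ≤ x) (k : ℕ) :
    s.esymm k ≤ (Multiset.card s).choose k * (s.sum / Multiset.card s) ^ k := by
  induction s using Multiset.induction_on generalizing k with
  | empty => cases k <;> simp [Multiset.esymm, Multiset.powersetCard_zero_right]
  | cons a s ih =>
    cases k with
    | zero => simp [Multiset.esymm]
    | succ k =>
      have ha : 0 ≤ a := hs a (Multiset.mem_cons_self a s)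
      have hs' : ∀ x ∈ s, 0 ≤ x := fun x hx => hs x (Multiset.mem_cons_of_mem hx)
      set u := s.sum / Multiset.card s
      have hu : 0 ≤ u := div_nonneg (Multiset.sum_nonneg hs') (Nat.cast_nonneg _)
      have hsum : s.sum = Multiset.card s * u := by
        rcases eq_or_ne s 0 with rfl | hs0
        · simp
        · rw [mul_div_cancel₀ _ (by simpa using hs0)]
      calc (a ::ₘ s).esymm (k + 1) = s.esymm (k + 1) + a * s.esymm k := s.esymm_cons_succ a k
        _ ≤ (Multiset.card s).choose (k + 1) * u ^ (k + 1) +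
              a * ((Multiset.card s).choose k * u ^ k) := by
          gcongr
          exacts [ih hs' (k + 1), ih hs' k]
        _ ≤ _ := choose_mul_pow_add_le _ k hu ha
        _ = _ := by simp [hsum]

end Maclaurin

theorem SimpleGraph.Coloring.kcliques_le_sum_prod_card {V ι : Type*} [Fintype V] [Fintype ι]
    [DecidableEq ι] {G : SimpleGraph V} (C : G.Coloring ι) (r : ℕ) :
    kcliques G r ≤ ∑ T ∈ univ.powersetCard r, ∏ j ∈ T, (univ.filter fun v => C v = j).card := by
  classical
  have hcliques : {t : Finset V | G.IsNClique r t} = ↑(univ.filter (G.IsNClique r)) := by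
    ext; simp
  rw [kcliques, hcliques, Set.ncard_coe_finset]
  simp_rw [← card_pi, ← card_sigma]
  refine card_le_card_of_surjOn (fun p => p.1.attach.image fun j => p.2 j.1 j.2) ?_
  intro t ht
  obtain ⟨htG, htr⟩ := (mem_filter.1 ht).2
  have hinj : Set.InjOn C t := fun v hv w hw hvw => by
    by_contra hne
    exact C.valid (htG hv hw hne) hvw
  have hrep : ∀ j ∈ t.image C, ∃ v, v ∈ t ∧ C v = j := fun j hj => by simpa using hj
  choose g hgt hgC using hrep
  refine ⟨⟨t.image C, g⟩, ?_, ?_⟩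
  · simp only [coe_sigma, Set.mem_sigma_iff, mem_coe, mem_powersetCard, mem_pi, mem_filter]
    exact ⟨⟨subset_univ _, by rw [card_image_of_injOn hinj, htr]⟩,
      fun j hj => ⟨mem_univ _, hgC j hj⟩⟩
  · ext v
    simp only [mem_image, mem_attach, true_and, Subtype.exists]
    constructor
    · rintro ⟨j, hj, rfl⟩
      exact hgt j (mem_image.2 hj)
    · intro hv
      exact ⟨C v, ⟨v, hv, rfl⟩, hinj (hgt _ _) hv (hgC _ _)⟩

theorem Hi_cliques_upper_general (n s r i : ℕ) (hr : 3 ≤ r) (H : SimpleGraph (Fin n))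
    (π : Fin n → Fin s) (j₀ : Fin s)
    (hAdj : ∀ v w, H.Adj v w ↔ π v ≠ π w)
    (h0 : (Finset.univ.filter fun v => π v = j₀).card = i) :
    (kcliques H r : ℝ) ≤
      ((s - 1).choose (r - 1) : ℝ) * (((n : ℝ) - (i : ℝ)) / ((s : ℝ) - 1)) ^ (r - 1) * (i : ℝ) +
        ((s - 1).choose r : ℝ) * (((n : ℝ) - (i : ℝ)) / ((s : ℝ) - 1)) ^ r := by
  obtain ⟨k, rfl⟩ : ∃ k, r = k + 1 := ⟨r - 1, by omega⟩
  set f : Fin s → ℝ := fun j => (univ.filter fun v => π v = j).card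
  set m := (univ.erase j₀).val.map f
  have hfj₀ : f j₀ = i := by simp only [f, h0]
  have hsplit : univ.val.map f = (i : ℝ) ::ₘ m := by
    rw [← hfj₀, ← Multiset.map_cons, ← insert_val_of_notMem (notMem_erase j₀ univ),
      insert_erase (mem_univ j₀)]
  have hcard : Multiset.card m = s - 1 := by simp [m]
  have htotal : ∑ j, f j = n := by
    have := card_eq_sum_card_fiberwise (s := univ) fun v _ => mem_univ (π v)
    rw [card_univ, Fintype.card_fin] at this
    simp only [f]
    exact_mod_cast this.symm
  have hmean : m.sum / Multiset.card m = ((n : ℝ) - i) / ((s : ℝ) - 1) := by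
    rw [← sum_eq_multiset_sum, sum_erase_eq_sub (mem_univ j₀), htotal, hfj₀, hcard,
      Nat.cast_sub j₀.pos, Nat.cast_one]
  have hclique : (kcliques H (k + 1) : ℝ) ≤ (univ.val.map f).esymm (k + 1) := by
    have hcount : kcliques H (k + 1) ≤
        ∑ T ∈ univ.powersetCard (k + 1), ∏ j ∈ T, (univ.filter fun v => π v = j).card :=
      (SimpleGraph.Coloring.mk π fun {v w} => (hAdj v w).1).kcliques_le_sum_prod_card (k + 1)
    rw [esymm_map_val]
    simp only [f]
    exact_mod_cast hcount
  have hm : ∀ x ∈ m, 0 ≤ x := by simp [m, f]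
  rw [hsplit, Multiset.esymm_cons_succ] at hclique
  calc (kcliques H (k + 1) : ℝ) ≤ m.esymm (k + 1) + i * m.esymm k := hclique
    _ ≤ (s - 1).choose (k + 1) * (((n : ℝ) - i) / ((s : ℝ) - 1)) ^ (k + 1) +
          i * ((s - 1).choose k * (((n : ℝ) - i) / ((s : ℝ) - 1)) ^ k) := by
      rw [← hmean, ← hcard]
      gcongr <;> exact m.esymm_le_choose_mul_pow hm _
    _ = _ := by rw [Nat.add_sub_cancel]; ring

theorem Hi_cliques_upper (n s r i : ℕ) (hr : 3 ≤ r) (hrs : r ≤ s) (hsn : s ≤ n)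
    (hi : i ≤ n / s) (H : SimpleGraph (Fin n)) (π : Fin n → Fin s) (j₀ : Fin s)
    (hAdj : ∀ v w, H.Adj v w ↔ π v ≠ π w)
    (h0 : (Finset.univ.filter fun v => π v = j₀).card = i)
    (hclass : ∀ j : Fin s, j ≠ j₀ →
      (Finset.univ.filter fun v => π v = j).card = (n - i) / (s - 1) ∨
      (Finset.univ.filter fun v => π v = j).card = (n - i + (s - 2)) / (s - 1)) :
    (kcliques H r : ℝ) ≤
      ((s - 1).choose (r - 1) : ℝ) * (((n : ℝ) - (i : ℝ)) / ((s : ℝ) - 1)) ^ (r - 1) * (i : ℝ) +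
        ((s - 1).choose r : ℝ) * (((n : ℝ) - (i : ℝ)) / ((s : ℝ) - 1)) ^ r :=
  Hi_cliques_upper_general n s r i hr H π j₀ hAdj h0
end
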